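/- Fix a query q and suppose the click indicators c(d) for distinct documents d ∈ D_q are pairwise uncorrelated given q (with y ∼ π₀(·|q) and clicks from the click model). Then the conditional variance of the single-interaction exposure-based IPS estimate satisfies Var_{y,c}[ Σ_{d∈D_q} (ρ(d)/ρ₀(d)) · c(d) | q ] ≤ Z · Σ_{d∈D_q} ρ₀'(d) · (ρ'(d)/ρ₀'(d))². -/
import Mathlib


open Finset

noncomputable section

/-- Expectation of `f` under a (finitely supported) distribution `μ`. -/
def expect {Ω : Type*} [Fintype Ω] (μ : Ω → ℝ) (f : Ω → ℝ) : ℝ := ∑ ω, μ ω * f ω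

/-- Variance of `f` under a (finitely supported) distribution `μ`. -/
def variance {Ω : Type*} [Fintype Ω] (μ : Ω → ℝ) (f : Ω → ℝ) : ℝ :=
  expect μ fun ω => (f ω - expect μ f) ^ 2

/-- Examination probability that document `d` receives under ranking `y`
(an injective assignment of `K` documents of the candidate set to positions `1,…,K`);
documents not placed at any of the top-`K` positions get examination probability `0`. -/
def exam {Doc : Type*} [DecidableEq Doc] {Dq : Finset Doc} {K : ℕ}
    (E : Fin K → ℝ) (y : Fin K ↪ {x : Doc // x ∈ Dq}) (d : {x : Doc // x ∈ Dq}) : ℝ :=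
  ∑ k : Fin K, if y k = d then E k else 0

/-- Expected exposure `ρ(d)` of document `d` under a ranking policy `π`. -/
def expExposure {Doc : Type*} [DecidableEq Doc] {Dq : Finset Doc} {K : ℕ}
    (E : Fin K → ℝ) (π : (Fin K ↪ {x : Doc // x ∈ Dq}) → ℝ)
    (d : {x : Doc // x ∈ Dq}) : ℝ :=
  ∑ y : Fin K ↪ {x : Doc // x ∈ Dq}, π y * exam E y d

/-- Real-valued click indicator. -/
def ind (b : Bool) : ℝ := if b then 1 else 0

lemma variance_eq' {Ω : Type*} [Fintype Ω] (μ : Ω → ℝ) (hμ1 : ∑ ω, μ ω = 1) (f : Ω → ℝ) :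
    variance μ f = _root_.expect μ (fun ω => f ω ^ 2) - (_root_.expect μ f) ^ 2 := by
  unfold variance _root_.expect
  have h : ∀ ω ∈ (Finset.univ : Finset Ω), μ ω * (f ω - ∑ x, μ x * f x) ^ 2
      = μ ω * f ω ^ 2 - 2 * (∑ x, μ x * f x) * (μ ω * f ω) + (∑ x, μ x * f x) ^ 2 * μ ω := by
    intro ω _; ring
  rw [Finset.sum_congr rfl h, Finset.sum_add_distrib, Finset.sum_sub_distrib,
    ← Finset.mul_sum, ← Finset.mul_sum, hμ1]
  ring

lemma expect_sum' {Ω ι : Type*} [Fintype Ω] (μ : Ω → ℝ) (s : Finset ι) (g : ι → Ω → ℝ) :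
    _root_.expect μ (fun ω => ∑ i ∈ s, g i ω) = ∑ i ∈ s, _root_.expect μ (g i) := by
  unfold _root_.expect
  simp only [Finset.mul_sum]
  exact Finset.sum_comm

lemma expect_smul' {Ω : Type*} [Fintype Ω] (μ : Ω → ℝ) (a : ℝ) (g : Ω → ℝ) :
    _root_.expect μ (fun ω => a * g ω) = a * _root_.expect μ g := by
  unfold _root_.expect
  rw [Finset.mul_sum]
  exact Finset.sum_congr rfl fun ω _ => by ring

set_option maxHeartbeats 1600000

/-- fix a query `q` and suppose the click indicators `c(d)` for distinct
documents are pairwise uncorrelated given `q` (with `y ∼ π₀(·|q)` and clicks from the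
position-based click model; `μ` is the resulting joint distribution of `(y, c)`).
Then the conditional variance of the single-interaction exposure-based IPS estimate satisfies
`Var_{y,c}[ ∑_{d∈D_q} (ρ(d)/ρ₀(d))·c(d) | q ] ≤ Z · ∑_{d∈D_q} ρ₀'(d)·(ρ'(d)/ρ₀'(d))²`,
where `Z = ∑_{k=1}^K P(E=1|k)`, `ρ'(d) = ρ(d)/Z` and `ρ₀'(d) = ρ₀(d)/Z`. -/
theorem ips_per_query_variance_bound
    {Doc : Type*} [DecidableEq Doc] (Dq : Finset Doc) (K : ℕ)
    (E : Fin K → ℝ) (hE : ∀ k, 0 ≤ E k ∧ E k ≤ 1)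
    (rel : {x : Doc // x ∈ Dq} → ℝ) (hrel : ∀ d, 0 ≤ rel d ∧ rel d ≤ 1)
    -- the new policy and the logging policy
    (π π₀ : (Fin K ↪ {x : Doc // x ∈ Dq}) → ℝ)
    (hπ0 : ∀ y, 0 ≤ π y) (hπ1 : ∑ y, π y = 1)
    (hπ₀0 : ∀ y, 0 ≤ π₀ y) (hπ₀1 : ∑ y, π₀ y = 1)
    -- strictly positive logging exposure
    (hρ₀pos : ∀ d, 0 < expExposure E π₀ d)
    -- joint distribution of the displayed ranking and the clicks
    (μ : ((Fin K ↪ {x : Doc // x ∈ Dq}) × ({x : Doc // x ∈ Dq} → Bool)) → ℝ)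
    (hμ0 : ∀ ω, 0 ≤ μ ω) (hμ1 : ∑ ω, μ ω = 1)
    -- the ranking-marginal of the joint distribution is the logging policy `π₀`
    (hmarg : ∀ y, ∑ c : {x : Doc // x ∈ Dq} → Bool, μ (y, c) = π₀ y)
    -- position-based click model: conditionally on the displayed ranking `y`, document `d`
    -- is clicked with probability `P(E=1|rank(d|y)) · P(R=1|d,q)`
    (hclick : ∀ d y, ∑ c : {x : Doc // x ∈ Dq} → Bool, μ (y, c) * ind (c d)
        = π₀ y * (exam E y d * rel d))
    -- the click indicators of distinct documents are pairwise uncorrelated given `q`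
    (huncor : ∀ d d' : {x : Doc // x ∈ Dq}, d ≠ d' →
        expect μ (fun ω => ind (ω.2 d) * ind (ω.2 d'))
          = expect μ (fun ω => ind (ω.2 d)) * expect μ (fun ω => ind (ω.2 d'))) :
    variance μ (fun ω => ∑ d : {x : Doc // x ∈ Dq},
        (expExposure E π d / expExposure E π₀ d) * ind (ω.2 d))
      ≤ (∑ k : Fin K, E k) *
          ∑ d : {x : Doc // x ∈ Dq},
            (expExposure E π₀ d / ∑ k : Fin K, E k) *
              ((expExposure E π d / ∑ k : Fin K, E k) /
                (expExposure E π₀ d / ∑ k : Fin K, E k)) ^ 2 := by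
  classical
  set ρ := expExposure E π with hρ
  set ρ₀ := expExposure E π₀ with hρ₀def
  set Z := ∑ k : Fin K, E k with hZdef
  set w : {x : Doc // x ∈ Dq} → ℝ := fun d => ρ d / ρ₀ d with hwdef
  set e : {x : Doc // x ∈ Dq} → ℝ := fun d => _root_.expect μ (fun ω => ind (ω.2 d)) with hedef
  have hind_sq : ∀ b : Bool, ind b * ind b = ind b := by
    intro b; cases b <;> simp [ind]
  -- e d = ρ₀ d * rel d
  have he_eq : ∀ d, e d = ρ₀ d * rel d := by
    intro d
    rw [hedef]
    unfold _root_.expect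
    simp only []
    rw [Fintype.sum_prod_type]
    simp only [hclick d]
    rw [hρ₀def]; unfold expExposure
    rw [Finset.sum_mul]
    exact Finset.sum_congr rfl fun y _ => by ring
  -- the function in question
  show variance μ (fun ω => ∑ d : {x : Doc // x ∈ Dq}, w d * ind (ω.2 d)) ≤
      Z * ∑ d : {x : Doc // x ∈ Dq}, (ρ₀ d / Z) * ((ρ d / Z) / (ρ₀ d / Z)) ^ 2
  -- expectation of f
  have h1 : _root_.expect μ (fun ω => ∑ d : {x : Doc // x ∈ Dq}, w d * ind (ω.2 d)) = ∑ d : {x : Doc // x ∈ Dq}, w d * e d := by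
    rw [expect_sum']
    exact Finset.sum_congr rfl fun d _ => expect_smul' μ (w d) _
  -- expectation of f²
  have h2 : _root_.expect μ (fun ω => (∑ d : {x : Doc // x ∈ Dq}, w d * ind (ω.2 d)) ^ 2)
      = ∑ d : {x : Doc // x ∈ Dq}, ∑ d' : {x : Doc // x ∈ Dq}, w d * w d' * _root_.expect μ (fun ω => ind (ω.2 d) * ind (ω.2 d')) := by
    have : (fun ω : (Fin K ↪ {x : Doc // x ∈ Dq}) × ({x : Doc // x ∈ Dq} → Bool) => (∑ d : {x : Doc // x ∈ Dq}, w d * ind (ω.2 d)) ^ 2)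
        = fun ω => ∑ d : {x : Doc // x ∈ Dq}, ∑ d' : {x : Doc // x ∈ Dq}, w d * w d' * (ind (ω.2 d) * ind (ω.2 d')) := by
      funext ω
      rw [sq, Finset.sum_mul_sum]
      exact Finset.sum_congr rfl fun d _ => Finset.sum_congr rfl fun d' _ => by ring
    rw [this, expect_sum']
    refine Finset.sum_congr rfl fun d _ => ?_
    rw [expect_sum']
    exact Finset.sum_congr rfl fun d' _ => expect_smul' μ _ _
  have hvar : variance μ (fun ω => ∑ d : {x : Doc // x ∈ Dq}, w d * ind (ω.2 d))
      = ∑ d : {x : Doc // x ∈ Dq}, w d ^ 2 * (e d - e d ^ 2) := by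
    rw [variance_eq' μ hμ1, h1, h2, sq (∑ d : {x : Doc // x ∈ Dq}, w d * e d), Finset.sum_mul_sum,
      ← Finset.sum_sub_distrib]
    refine Finset.sum_congr rfl fun d _ => ?_
    rw [← Finset.sum_sub_distrib]
    rw [Finset.sum_eq_single d]
    · have : _root_.expect μ (fun ω => ind (ω.2 d) * ind (ω.2 d)) = e d := by
        rw [hedef]; unfold _root_.expect
        exact Finset.sum_congr rfl fun ω _ => by simp only [hind_sq]
      rw [this]; ring
    · intro d' _ hne
      rw [huncor d d' (Ne.symm hne)]
      show w d * w d' * (e d * e d') - w d * e d * (w d' * e d') = 0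
      ring
    · intro h; exact absurd (Finset.mem_univ d) h
  rw [hvar]
  -- bound each diagonal term
  have hbound : ∑ d : {x : Doc // x ∈ Dq}, w d ^ 2 * (e d - e d ^ 2) ≤ ∑ d : {x : Doc // x ∈ Dq}, w d ^ 2 * ρ₀ d := by
    refine Finset.sum_le_sum fun d _ => ?_
    refine mul_le_mul_of_nonneg_left ?_ (sq_nonneg _)
    calc e d - e d ^ 2 ≤ e d := by nlinarith [sq_nonneg (e d)]
      _ = ρ₀ d * rel d := he_eq d
      _ ≤ ρ₀ d * 1 := mul_le_mul_of_nonneg_left (hrel d).2 (hρ₀pos d).le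
      _ = ρ₀ d := mul_one _
  refine hbound.trans ?_
  -- identify the right-hand side
  by_cases hne : Nonempty {x : Doc // x ∈ Dq}
  · obtain ⟨d₀⟩ := hne
    have hZpos : 0 < Z := by
      have hexam_le : ∀ y : Fin K ↪ {x : Doc // x ∈ Dq}, exam E y d₀ ≤ Z := by
        intro y
        rw [hZdef]; unfold exam
        refine Finset.sum_le_sum fun k _ => ?_
        split <;> simp [(hE k).1, le_refl]
      have : ρ₀ d₀ ≤ Z := by
        rw [hρ₀def]; unfold expExposure
        calc ∑ y, π₀ y * exam E y d₀ ≤ ∑ y, π₀ y * Z :=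
              Finset.sum_le_sum fun y _ => mul_le_mul_of_nonneg_left (hexam_le y) (hπ₀0 y)
          _ = Z := by rw [← Finset.sum_mul, hπ₀1, one_mul]
      exact lt_of_lt_of_le (hρ₀pos d₀) this
    have hrhs : Z * ∑ d : {x : Doc // x ∈ Dq}, (ρ₀ d / Z) * ((ρ d / Z) / (ρ₀ d / Z)) ^ 2
        = ∑ d : {x : Doc // x ∈ Dq}, w d ^ 2 * ρ₀ d := by
      rw [Finset.mul_sum]
      refine Finset.sum_congr rfl fun d _ => ?_
      rw [hwdef]
      have h0 : ρ₀ d ≠ 0 := (hρ₀pos d).ne'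
      have hZ0 : Z ≠ 0 := hZpos.ne'
      field_simp
    rw [hrhs]
  · have hDq : Dq = ∅ := by
      rw [Finset.eq_empty_iff_forall_notMem]
      intro x hx
      exact hne ⟨⟨x, hx⟩⟩
    subst hDq
    simp
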